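/- Let G be a pointed projective matroid (a finitary simple pointed matroid satisfying the projective law), with the associated commutative mosaic structure (0 the identity, x + x = {x, 0}, and x + y = C({x,y}) \ {x, y, 0} for distinct nonzero x, y). Then for every subset S ⊆ G, the matroid closure C(S) equals the strict submosaic generated by S; in particular the closed subsets of G are exactly the strict submosaics. -/

import Mathlib

open Classical

/-!
Since the mosaic sum `x + y` of distinct nonzero points is `C {x, y}` with `x`, `y`, `0`
removed, a strict submosaic `T` absorbs the closure of every pair of its points. The
projective law writes `C (insert a F)` as the union of the closures of pairs `{x, y}` with
`x ∈ C {a}` and `y ∈ C F`, so induction on finite `F` shows that `T` contains `C F` whenever it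
contains `F`, and finitarity passes to arbitrary subsets. Conversely, `C S` is itself a strict
submosaic, because every sum `x + y` lies in `C {x, y}`.
-/

def pointedAdd {G : Type*} (C : Set G → Set G) (z : G) (x y : G) : Set G :=
  if x = z then {y} else if y = z then {x}
  else if x = y then {x, z} else C {x, y} \ {x, y, z}

/-- Every element of the mosaic is its own inverse, so closure under inverses is automatic. -/
def IsStrictSubmosaic {G : Type*} (add : G → G → Set G) (z : G) (T : Set G) : Prop :=
  z ∈ T ∧ ∀ x ∈ T, ∀ y ∈ T, add x y ⊆ T

section PointedClosure

variable {G : Type*} (c : ClosureOperator (Set G)) {z : G}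

theorem zero_mem_closure (hzero : c ∅ = {z}) (U : Set G) : z ∈ c U :=
  c.monotone (Set.empty_subset U) (hzero ▸ rfl)

theorem pointedAdd_subset_closure (hzero : c ∅ = {z}) (x y : G) :
    pointedAdd c z x y ⊆ c {x, y} := by
  have hpair : ({x, y} : Set G) ⊆ c {x, y} := c.le_closure _
  unfold pointedAdd
  split_ifs with hx hy hxy
  · exact Set.singleton_subset_iff.2 (hpair (.inr rfl))
  · exact Set.singleton_subset_iff.2 (hpair (.inl rfl))
  · exact Set.insert_subset (hpair (.inl rfl))
      (Set.singleton_subset_iff.2 (zero_mem_closure c hzero _))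
  · exact Set.sdiff_subset

theorem closure_pair_subset (hsimple : ∀ x : G, c {x} = {x, z}) (x y : G) :
    c {x, y} ⊆ {x, y, z} ∪ pointedAdd c z x y := by
  by_cases hdeg : x = z ∨ y = z ∨ x = y
  · refine Set.Subset.trans ?_ Set.subset_union_left
    rcases hdeg with rfl | rfl | rfl
    · rw [Set.pair_comm, ← hsimple, c.idempotent, hsimple]
      intro w; simp
    · rw [← hsimple, c.idempotent, hsimple]
      intro w; simp
    · rw [Set.pair_eq_singleton, hsimple]
      intro w; simp
  · obtain ⟨hx, hy, hxy⟩ : x ≠ z ∧ y ≠ z ∧ x ≠ y := by tauto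
    intro w hw
    by_cases hw' : w ∈ ({x, y, z} : Set G)
    · exact .inl hw'
    · simp only [pointedAdd, if_neg hx, if_neg hy, if_neg hxy]
      exact .inr ⟨hw, hw'⟩

theorem closure_pair_subset_of_isStrictSubmosaic (hsimple : ∀ x : G, c {x} = {x, z})
    {T : Set G} (hT : IsStrictSubmosaic (pointedAdd c z) z T) {x y : G} (hx : x ∈ T)
    (hy : y ∈ T) : c {x, y} ⊆ T := by
  refine (closure_pair_subset c hsimple x y).trans (Set.union_subset ?_ (hT.2 x hx y hy))
  rintro w (rfl | rfl | rfl)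
  exacts [hx, hy, hT.1]

theorem closure_subset_of_finite_subset (hzero : c ∅ = {z})
    (hsimple : ∀ x : G, c {x} = {x, z})
    (hproj : ∀ S T : Set G, c (S ∪ T) = ⋃ x ∈ c S, ⋃ y ∈ c T, c {x, y})
    {T : Set G} (hT : IsStrictSubmosaic (pointedAdd c z) z T) {F : Set G} (hF : F.Finite)
    (hFT : F ⊆ T) : c F ⊆ T := by
  induction F, hF using Set.Finite.induction_on with
  | empty => simpa [hzero] using hT.1
  | @insert a F _ _ ih =>
    rw [Set.insert_eq, hproj]
    simp only [Set.iUnion_subset_iff]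
    intro x hx y hy
    have hxT : x ∈ T := by
      rw [hsimple] at hx
      rcases hx with rfl | rfl
      exacts [hFT (Set.mem_insert _ _), hT.1]
    exact closure_pair_subset_of_isStrictSubmosaic c hsimple hT hxT
      (ih ((Set.subset_insert a F).trans hFT) hy)

theorem closure_subset_of_isStrictSubmosaic (hzero : c ∅ = {z})
    (hsimple : ∀ x : G, c {x} = {x, z})
    (hfin : ∀ S : Set G, c S = ⋃ T ∈ {T : Set G | T ⊆ S ∧ T.Finite}, c T)
    (hproj : ∀ S T : Set G, c (S ∪ T) = ⋃ x ∈ c S, ⋃ y ∈ c T, c {x, y})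
    {S T : Set G} (hST : S ⊆ T) (hT : IsStrictSubmosaic (pointedAdd c z) z T) : c S ⊆ T := by
  rw [hfin]
  simp only [Set.iUnion_subset_iff]
  exact fun F ⟨hFS, hF⟩ =>
    closure_subset_of_finite_subset c hzero hsimple hproj hT hF (hFS.trans hST)

theorem isStrictSubmosaic_closure (hzero : c ∅ = {z}) (S : Set G) :
    IsStrictSubmosaic (pointedAdd c z) z (c S) := by
  refine ⟨zero_mem_closure c hzero S, fun x hx y hy => ?_⟩
  calc pointedAdd c z x y ⊆ c {x, y} := pointedAdd_subset_closure c hzero x y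
    _ ⊆ c S := c.le_closure_iff.1 (Set.insert_subset hx (Set.singleton_subset_iff.2 hy))

end PointedClosure

theorem stmt_19_general {G : Type*} (C : Set G → Set G) (z : G)
    (hext : ∀ S : Set G, S ⊆ C S)
    (hmono : ∀ S T : Set G, S ⊆ T → C S ⊆ C T)
    (hidem : ∀ S : Set G, C (C S) = C S)
    (hzero : C ∅ = {z}) (hsimple : ∀ x : G, C {x} = {x, z})
    (hfin : ∀ S : Set G, C S = ⋃ T ∈ {T : Set G | T ⊆ S ∧ T.Finite}, C T)
    (hproj : ∀ S T : Set G, C (S ∪ T) = ⋃ x ∈ C S, ⋃ y ∈ C T, C {x, y}) :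
    let add : G → G → Set G := fun x y =>
      if x = z then {y} else if y = z then {x}
      else if x = y then {x, z} else C {x, y} \ {x, y, z}
    ∀ S : Set G,
      C S = ⋂₀ {T : Set G | S ⊆ T ∧ z ∈ T ∧ ∀ x ∈ T, ∀ y ∈ T, add x y ⊆ T} ∧
      (C S = S ↔ (z ∈ S ∧ ∀ x ∈ S, ∀ y ∈ S, add x y ⊆ S)) := by
  intro add S
  let c := ClosureOperator.mk' C hmono hext fun S => (hidem S).le
  have hsub : ∀ T, S ⊆ T → IsStrictSubmosaic add z T → C S ⊆ T :=
    fun _ hST hT => closure_subset_of_isStrictSubmosaic c hzero hsimple hfin hproj hST hT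
  have hclosed : IsStrictSubmosaic add z (C S) := isStrictSubmosaic_closure c hzero S
  refine ⟨(Set.subset_sInter fun T hT => hsub T hT.1 hT.2).antisymm
    (Set.sInter_subset_of_mem ⟨hext S, hclosed⟩), fun h => h ▸ hclosed, fun hS => ?_⟩
  exact (hsub S subset_rfl hS).antisymm (hext S)

/-- In a pointed projective matroid, the closure of any subset equals the strict
submosaic it generates; in particular the closed sets are exactly the strict submosaics. -/
theorem stmt_19 {G : Type*} (C : Set G → Set G) (z : G)
    (hext : ∀ S : Set G, S ⊆ C S)
    (hmono : ∀ S T : Set G, S ⊆ T → C S ⊆ C T)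
    (hidem : ∀ S : Set G, C (C S) = C S)
    (hexch : ∀ (x y : G) (S : Set G), x ∉ C S → x ∈ C (insert y S) → y ∈ C (insert x S))
    (hzero : C ∅ = {z}) (hsimple : ∀ x : G, C {x} = {x, z})
    (hfin : ∀ S : Set G, C S = ⋃ T ∈ {T : Set G | T ⊆ S ∧ T.Finite}, C T)
    (hproj : ∀ S T : Set G, C (S ∪ T) = ⋃ x ∈ C S, ⋃ y ∈ C T, C {x, y}) :
    let add : G → G → Set G := fun x y =>
      if x = z then {y} else if y = z then {x}
      else if x = y then {x, z} else C {x, y} \ {x, y, z}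
    ∀ S : Set G,
      C S = ⋂₀ {T : Set G | S ⊆ T ∧ z ∈ T ∧ ∀ x ∈ T, ∀ y ∈ T, add x y ⊆ T} ∧
      (C S = S ↔ (z ∈ S ∧ ∀ x ∈ S, ∀ y ∈ S, add x y ⊆ S)) :=
  stmt_19_general C z hext hmono hidem hzero hsimple hfin hproj
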